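/- arXiv:2409.16014 — 4 statements merged into one kernel-verified Lean document; each statement's English description precedes it below -/
import Mathlib

section
/- Let $\Bbbk$ be an algebraically closed field of characteristic zero, let $0 \le p' \le p$ be integers, let $b_1, \ldots, b_{p'} \in \Bbbk$ be fixed, and let $a^{(1)}, \ldots, a^{(p-p')} \in \Bbbk$ be given. Then there exist $b_{p'+1}, \ldots, b_p \in \Bbbk$ such that $e_r(b_1, \ldots, b_p) = a^{(r)}$ for all $1 \le r \le p - p'$. -/
/-!
Let `P₀ = ∏ (X - b_j)` over the fixed values. Prescribing `e_1, …, e_{p-p'}` of the full list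
amounts, by Vieta, to prescribing the top `p - p'` lower coefficients of `P₀ * P`, where `P` is
the monic polynomial whose roots are the new values. These coefficients form a triangular system
in the coefficients of `P`, so a suitable monic `P` of degree `p - p'` exists, and over an
algebraically closed field it splits; its roots are the required `b_{p'+1}, …, b_p`.
-/

open Finset

/-- The `r`-th elementary symmetric polynomial of `p` values. -/
noncomputable def esym {k : Type*} [CommRing k] (p r : ℕ) (b : Fin p → k) : k :=
  ∑ s ∈ Finset.powersetCard r (Finset.univ : Finset (Fin p)), ∏ i ∈ s, b i

open Polynomial

theorem Polynomial.Monic.exists_monic_coeff_mul_eq {R : Type*} [CommRing R] [Nontrivial R]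
    {P₀ : R[X]} (hP₀ : P₀.Monic) (m : ℕ) (f : ℕ → R) :
    ∃ P : R[X], P.Monic ∧ P.natDegree = m ∧
      ∀ r, 1 ≤ r → r ≤ m → (P₀ * P).coeff (P₀.natDegree + m - r) = f r := by
  induction m with
  | zero => exact ⟨1, monic_one, natDegree_one, fun r h1 h2 => by omega⟩
  | succ m ih =>
    obtain ⟨P, hP, hPdeg, hPcoeff⟩ := ih
    -- the new constant term fixes the new lowest coefficient; the higher ones are shifted by `X`
    set c := f (m + 1) - (P₀ * (P * X)).coeff P₀.natDegree
    have hPX : (P * X).natDegree = m + 1 := by rw [natDegree_mul_X hP.ne_zero, hPdeg]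
    refine ⟨P * X + C c, (hP.mul monic_X).add_of_left ?_, by rw [natDegree_add_C, hPX], ?_⟩
    · rw [degree_eq_natDegree (hP.mul monic_X).ne_zero, hPX]
      exact degree_C_le.trans_lt (by exact_mod_cast m.succ_pos)
    intro r hr1 hr2
    rw [mul_add, coeff_add, mul_comm P₀ (C c), coeff_C_mul]
    rcases hr2.eq_or_lt with rfl | _
    · rw [Nat.add_sub_cancel, hP₀.coeff_natDegree]
      ring
    · rw [show P₀.natDegree + (m + 1) - r = P₀.natDegree + m - r + 1 by omega, ← mul_assoc,
        coeff_mul_X, hPcoeff r hr1 (by omega), coeff_eq_zero_of_natDegree_lt (by omega)]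
      ring

theorem Multiset.exists_card_eq_esymm_add_eq {k : Type*} [Field k] [IsAlgClosed k]
    (s : Multiset k) (m : ℕ) (a : ℕ → k) :
    ∃ t : Multiset k, Multiset.card t = m ∧
      ∀ r, 1 ≤ r → r ≤ m → (s + t).esymm r = a r := by
  set P₀ := (s.map fun x => X - C x).prod
  have hP₀ : P₀.Monic := monic_multiset_prod_of_monic _ _ fun x _ => monic_X_sub_C x
  have hP₀deg : P₀.natDegree = Multiset.card s := natDegree_multiset_prod_X_sub_C_eq_card s
  obtain ⟨P, hP, hPdeg, hPcoeff⟩ := hP₀.exists_monic_coeff_mul_eq m fun r => (-1) ^ r * a r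
  have hroots : Multiset.card P.roots = P.natDegree :=
    splits_iff_card_roots.mp (IsAlgClosed.splits P)
  refine ⟨P.roots, hroots.trans hPdeg, fun r hr1 hr2 => ?_⟩
  have hcard : Multiset.card (s + P.roots) = Multiset.card s + m := by
    rw [Multiset.card_add, hroots, hPdeg]
  have hprod : ((s + P.roots).map fun x => X - C x).prod = P₀ * P := by
    rw [Multiset.map_add, Multiset.prod_add,
      prod_multiset_X_sub_C_of_monic_of_roots_card_eq hP hroots]
  have hvieta :=
    Multiset.prod_X_sub_C_coeff (s + P.roots) (k := Multiset.card s + m - r) (by omega)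
  rw [hprod, ← hP₀deg, hPcoeff r hr1 hr2, hcard, hP₀deg, Nat.sub_sub_self (by omega)] at hvieta
  exact (mul_left_cancel₀ (pow_ne_zero r (neg_ne_zero.mpr one_ne_zero)) hvieta).symm

theorem Multiset.exists_univ_val_map_eq {α : Type*} {m : ℕ} (t : Multiset α)
    (ht : Multiset.card t = m) : ∃ c : Fin m → α, univ.val.map c = t := by
  have hlen : t.toList.length = m := by rw [Multiset.length_toList, ht]
  refine ⟨fun i => t.toList.get (i.cast hlen.symm), ?_⟩
  rw [Fin.univ_val_map, ← List.ofFn_congr hlen, List.ofFn_get, Multiset.coe_toList]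

theorem esym_eq_esymm {k : Type*} [CommRing k] (p r : ℕ) (b : Fin p → k) :
    esym p r b = (univ.val.map b).esymm r :=
  (esymm_map_val b univ r).symm

theorem stmt1_general {k : Type*} [Field k] [IsAlgClosed k]
    (p' p : ℕ) (h : p' ≤ p) (b₀ : Fin p' → k) (a : ℕ → k) :
    ∃ b : Fin p → k, (∀ j : Fin p', b (Fin.castLE h j) = b₀ j) ∧
      ∀ r : ℕ, 1 ≤ r → r ≤ p - p' → esym p r b = a r := by
  obtain ⟨m, rfl⟩ := Nat.exists_eq_add_of_le h
  obtain ⟨t, ht, hesymm⟩ := (univ.val.map b₀).exists_card_eq_esymm_add_eq m a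
  obtain ⟨c, rfl⟩ := t.exists_univ_val_map_eq ht
  refine ⟨Fin.append b₀ c, fun j => Fin.append_left b₀ c j, fun r hr1 hr2 => ?_⟩
  rw [esym_eq_esymm, ← hesymm r hr1 (by omega)]
  simp [Fin.univ_val_map]

/-- Induction step of Lemma 4.1: over an algebraically closed field of characteristic
zero, a partial list `b₀ : Fin p' → k` can be extended to `b : Fin p → k` so that
`e_r(b_1, …, b_p) = a r` for all `1 ≤ r ≤ p - p'`. -/
theorem stmt1 {k : Type*} [Field k] [IsAlgClosed k] [CharZero k]
    (p' p : ℕ) (h : p' ≤ p) (b₀ : Fin p' → k) (a : ℕ → k) :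
    ∃ b : Fin p → k, (∀ j : Fin p', b (Fin.castLE h j) = b₀ j) ∧
      ∀ r : ℕ, 1 ≤ r → r ≤ p - p' → esym p r b = a r :=
  stmt1_general p' p h b₀ a
end

section
/- Fix a $0^m1^n$-sequence $\Upsilon$ (i.e. a function $|\cdot| : \{1,\ldots,m+n\} \to \{0,1\}$) and integers $0 = p_0 \le p_1 \le \cdots \le p_{m+n}$. Given elements $a_i^{(r)} \in \Bbbk$ for $1 \le i \le m+n$ and $1 \le r \le p_i - p_{i-1}$, there exist elements $b_{i,j} \in \Bbbk$ for $1 \le i \le m+n$, $1 \le j \le p_i$, such that: (1) $b_{i, p_i - p_{i-1} + r} = b_{i-1, r}$ for $1 \le r \le p_{i-1}$; and (2) $e_r((-1)^{|i|} b_{i,1}, \ldots, (-1)^{|i|} b_{i,p_i}) = (-1)^{r|i|} a_i^{(r)}$ for $1 \le r \le p_i - p_{i-1}$. -/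
/-!
Induct on `i`. The values `b (i-1) 1, …, b (i-1) (p (i-1))` must reappear as the last
`p (i-1)` values of row `i`, so let `Q` be the monic polynomial with these roots. Take any monic
`N` of degree `p i` whose top `p i - p (i-1)` coefficients are the prescribed ones (with Vieta's
signs) and divide: `N = Q * P + R` with `deg R < deg Q`, so `Q * P` has the same top coefficients
as `N`. Over an algebraically closed field `P` splits, its roots are the new values of row `i`,
and Vieta's formulas turn the coefficients of `Q * P` into elementary symmetric functions of its
roots. The sign `(-1) ^ par i` only rescales `e_r` by `(-1) ^ (r * par i)`.
-/

open Finset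

namespace Polynomial

theorem exists_monic_natDegree_coeff_eq {R : Type*} [CommRing R] [Nontrivial R] (D : ℕ)
    (c : ℕ → R) : ∃ N : R[X], N.Monic ∧ N.natDegree = D ∧ ∀ j < D, N.coeff j = c j := by
  have hlow : (∑ j : Fin D, C (c j) * X ^ (j : ℕ)).degree < (D : WithBot ℕ) :=
    degree_sum_fin_lt _
  refine ⟨_, monic_X_pow_add hlow, ?_, fun j hj => ?_⟩
  · rw [natDegree_add_eq_left_of_degree_lt (by rwa [degree_X_pow]), natDegree_X_pow]
  · rw [coeff_add, coeff_X_pow, if_neg hj.ne, zero_add, finsetSum_coeff]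
    simp_rw [coeff_C_mul_X_pow]
    rw [Finset.sum_eq_single ⟨j, hj⟩] <;> simp +contextual [Fin.ext_iff, eq_comm]

theorem coeff_mul_divByMonic_of_natDegree_le {R : Type*} [CommRing R] {Q : R[X]} (hQ : Q.Monic)
    (N : R[X]) {j : ℕ} (hj : Q.natDegree ≤ j) : (Q * (N /ₘ Q)).coeff j = N.coeff j := by
  nontriviality R
  have hmod : (N %ₘ Q).coeff j = 0 := coeff_eq_zero_of_degree_lt <|
    (degree_modByMonic_lt N hQ).trans_le (degree_le_natDegree.trans (by exact_mod_cast hj))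
  conv_rhs => rw [← modByMonic_add_div N Q]
  rw [coeff_add, hmod, zero_add]

end Polynomial

namespace Multiset

theorem exists_range_map_eq {α : Type*} [Nonempty α] (T : Multiset α) :
    ∃ g : ℕ → α, (range (card T)).map g = T := by
  refine ⟨fun j => T.toList.getD j (Classical.arbitrary α), ?_⟩
  conv_rhs => rw [← coe_toList T]
  rw [← length_toList, range, map_coe]
  congr 1
  exact List.ext_getElem (by simp) fun i _ h => by simp [List.getElem?_eq_getElem h]

open Polynomial in
theorem exists_card_eq_esymm_add_eq_s4 {k : Type*} [Field k] [IsAlgClosed k]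
    (S : Multiset k) (d : ℕ) (t : ℕ → k) :
    ∃ T : Multiset k, card T = d ∧ ∀ r, 1 ≤ r → r ≤ d → (S + T).esymm r = t r := by
  set q := card S
  set Q : k[X] := (S.map fun a => X - C a).prod
  have hQ : Q.Monic := monic_multiset_prod_of_monic _ _ fun a _ => monic_X_sub_C a
  have hQdeg : Q.natDegree = q := natDegree_multiset_prod_X_sub_C_eq_card S
  obtain ⟨N, hN, hNdeg, hNcoeff⟩ :=
    exists_monic_natDegree_coeff_eq (q + d) fun j => (-1) ^ (q + d - j) * t (q + d - j)
  set P := N /ₘ Q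
  have hP : P.Monic := by
    have hQN : Q.degree ≤ N.degree := by
      rw [degree_eq_natDegree hQ.ne_zero, degree_eq_natDegree hN.ne_zero, hQdeg, hNdeg]
      exact_mod_cast q.le_add_right d
    rw [Monic, leadingCoeff_divByMonic_of_monic hQ hQN, hN.leadingCoeff]
  have hPdeg : P.natDegree = d := by rw [natDegree_divByMonic _ hQ, hNdeg, hQdeg]; omega
  have hF : (Q * P).Monic := hQ.mul hP
  have hFdeg : (Q * P).natDegree = q + d := by rw [hQ.natDegree_mul hP, hQdeg, hPdeg]
  have hFroots : (Q * P).roots = S + P.roots := by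
    rw [roots_mul hF.ne_zero, roots_multiset_prod_X_sub_C]
  refine ⟨P.roots, by rw [IsAlgClosed.card_roots_eq_natDegree, hPdeg], fun r hr hrd => ?_⟩
  have hvieta := coeff_eq_esymm_roots_of_card IsAlgClosed.card_roots_eq_natDegree
    (k := q + d - r) (by rw [hFdeg]; omega)
  rw [hF.leadingCoeff, hFdeg, hFroots, Nat.sub_sub_self (by omega),
    coeff_mul_divByMonic_of_natDegree_le hQ N (by omega), hNcoeff _ (by omega),
    Nat.sub_sub_self (by omega), one_mul] at hvieta
  exact (mul_right_injective₀ (pow_ne_zero r (neg_ne_zero.mpr one_ne_zero)) hvieta).symm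

end Multiset

theorem exists_shifted_extension_esymm_eq {k : Type*} [Field k] [IsAlgClosed k] (q d : ℕ)
    (y t : ℕ → k) :
    ∃ x : ℕ → k, (∀ r, 1 ≤ r → x (d + r) = y r) ∧
      ∀ r, 1 ≤ r → r ≤ d → ((Multiset.range (d + q)).map fun j => x (j + 1)).esymm r = t r := by
  obtain ⟨T, hTcard, hT⟩ :=
    ((Multiset.range q).map fun j => y (j + 1)).exists_card_eq_esymm_add_eq_s4 d t
  obtain ⟨g, hg⟩ := T.exists_range_map_eq
  rw [hTcard] at hg
  let x : ℕ → k := fun j => if j ≤ d then g (j - 1) else y (j - d)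
  have hsplit : (Multiset.range (d + q)).map (fun j => x (j + 1)) =
      (Multiset.range q).map (fun j => y (j + 1)) + T := by
    rw [Multiset.range_add, Multiset.map_add, Multiset.map_map, add_comm, ← hg]
    congr 1 <;> refine Multiset.map_congr rfl fun j hj => ?_ <;> rw [Multiset.mem_range] at hj
    · simp [x, show d + j + 1 - d = j + 1 by omega]
    · simp [x, show j + 1 ≤ d by omega]
  refine ⟨x, fun r hr => ?_, fun r hr hrd => ?_⟩
  · simp [x, show ¬ d + r ≤ d by omega]
  · rw [hsplit, hT r hr hrd]

theorem esym_eq_esymm_map_range {k : Type*} [CommRing k] (p r : ℕ) (f : ℕ → k) :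
    esym p r (fun j => f j) = ((Multiset.range p).map f).esymm r := by
  rw [esym, ← Finset.esymm_map_val]
  congr 1
  calc univ.val.map (fun j : Fin p => f j)
      = ((univ : Finset (Fin p)).map Fin.valEmbedding).val.map f := by
        rw [Finset.map_val, Multiset.map_map]; rfl
    _ = (Multiset.range p).map f := by
        rw [Fin.map_valEmbedding_univ, Nat.Iio_eq_range, Finset.range_val]

theorem esym_mul_left {k : Type*} [CommRing k] (p r : ℕ) (c : k) (f : Fin p → k) :
    esym p r (fun j => c * f j) = c ^ r * esym p r f := by
  simp only [esym, ← Finset.esymm_map_val]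
  rw [← smul_eq_mul, Multiset.pow_smul_esymm, Multiset.map_map]
  rfl

theorem stmt4_general {k : Type*} [Field k] [IsAlgClosed k]
    (m n : ℕ) (par : ℕ → ℕ)
    (p : ℕ → ℕ) (hmono : Monotone p)
    (a : ℕ → ℕ → k) :
    ∃ b : ℕ → ℕ → k,
      (∀ i r, 1 ≤ i → i ≤ m + n → 1 ≤ r → r ≤ p (i - 1) →
        b i (p i - p (i - 1) + r) = b (i - 1) r) ∧
      (∀ i r, 1 ≤ i → i ≤ m + n → 1 ≤ r → r ≤ p i - p (i - 1) →
        esym (p i) r (fun j => ((-1 : k) ^ par i) * b i (j.1 + 1)) =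
          ((-1 : k) ^ (r * par i)) * a i r) := by
  choose step hshift hesymm using fun i y =>
    exists_shifted_extension_esymm_eq (p i) (p (i + 1) - p i) y (a (i + 1))
  let b : ℕ → ℕ → k := fun i => Nat.rec (motive := fun _ => ℕ → k) 0 step i
  refine ⟨b, fun i r hi _ hr _ => ?_, fun i r hi _ hr hrd => ?_⟩
  · obtain ⟨i, rfl⟩ := Nat.exists_eq_add_of_le' hi
    exact hshift i (b i) r hr
  · obtain ⟨i, rfl⟩ := Nat.exists_eq_add_of_le' hi
    have hp : p (i + 1) - p i + p i = p (i + 1) := Nat.sub_add_cancel (hmono i.le_succ)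
    have hrow := hesymm i (b i) r hr hrd
    rw [hp] at hrow
    rw [esym_mul_left, esym_eq_esymm_map_range _ _ fun j => b (i + 1) (j + 1), ← pow_mul,
      mul_comm r]
    exact congrArg _ hrow

/-- Lemma 4.1 of the paper: given a `0^m 1^n`-sequence `par` and integers
`0 = p 0 ≤ p 1 ≤ ⋯ ≤ p (m+n)`, and scalars `a i r` for `1 ≤ i ≤ m+n`,
`1 ≤ r ≤ p i - p (i-1)`, there exist `b i j` (`1 ≤ j ≤ p i`) satisfying the
overlap conditions and prescribing the signed elementary symmetric functions. -/
theorem stmt4 {k : Type*} [Field k] [IsAlgClosed k] [CharZero k]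
    (m n : ℕ) (par : ℕ → ℕ) (hpar : ∀ i, par i ≤ 1)
    (p : ℕ → ℕ) (hp0 : p 0 = 0) (hmono : Monotone p)
    (a : ℕ → ℕ → k) :
    ∃ b : ℕ → ℕ → k,
      (∀ i r, 1 ≤ i → i ≤ m + n → 1 ≤ r → r ≤ p (i - 1) →
        b i (p i - p (i - 1) + r) = b (i - 1) r) ∧
      (∀ i r, 1 ≤ i → i ≤ m + n → 1 ≤ r → r ≤ p i - p (i - 1) →
        esym (p i) r (fun j => ((-1 : k) ^ par i) * b i (j.1 + 1)) =
          ((-1 : k) ^ (r * par i)) * a i r) :=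
  stmt4_general m n par p hmono a
end

section
/- With $\pi$ and $\widetilde{\rho}$ as in Lemma 2.8, and $\lambda_A = \sum_{i \in I} a_i \varepsilon_i$ for a tableau $A \in \mathrm{Tab}_\Bbbk(\pi)$ with entries $a_i$, the weight $\lambda_A - \widetilde{\rho}$ satisfies the conditions of Lemma 2.7 (constancy on even-parity columns, antisymmetry across parities in a column) if and only if $A$ is column-connected, i.e. whenever box $j$ is directly below box $i$: $a_i = a_j + 1$ if $\bar{p}(i) = \bar{p}(j)$, and $a_i + a_j = -1$ if $\bar{p}(i) \ne \bar{p}(j)$. -/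
open Finset

/-- The `ε_t`-coefficient of the shifted weight `ρ̃` of the paper. -/
def rhoTilde {I : Type*} (par col : I → ℕ) (rk : I → ℤ) (h : ℤ) (ℓ : ℕ) (q : ℕ → ℤ)
    (t : I) : ℤ :=
  (-1) ^ par t * (h - rk t - ∑ c ∈ Finset.Icc (col t) ℓ, q c)

/-!
Multiplying the coefficient of `ε_i` by the sign `(-1) ^ par i` turns both conditions of
Lemma 2.7 into the single condition that the signed coefficients agree within each column.
For `λ_A - ρ̃` the signed coefficient of `ε_i` is `(-1) ^ par i * a i - (h - rk i - ∑ q)`, and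
since `rk` moves by `(-1) ^ par j` from a box `i` to the box `j` below it, two vertically
adjacent signed coefficients agree exactly when `A` is column-connected at `(i, j)`.
Convexity of columns then reduces agreement along a column to agreement of neighbours.
-/

theorem neg_one_pow_mul_eq_neg_one_pow_mul_iff {R : Type*} [Ring R] {p p' : ℕ}
    (hp : p ≤ 1) (hp' : p' ≤ 1) (x y : R) :
    (-1) ^ p * x = (-1) ^ p' * y ↔ (p = p' → x = y) ∧ (p ≠ p' → x + y = 0) := by
  interval_cases p <;> interval_cases p' <;>
    simp [eq_neg_iff_add_eq_zero, neg_eq_iff_add_eq_zero, neg_add_eq_zero]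

theorem eq_of_col_eq_of_eq_below {I β : Type*} (row col : I → ℕ) (s : I → β)
    (hinj : ∀ i j : I, row i = row j → col i = col j → i = j)
    (hconvex : ∀ i j : I, col i = col j → row i < row j →
      ∃ t : I, col t = col i ∧ row t = row i + 1)
    (hbelow : ∀ i j : I, col j = col i → row j = row i + 1 → s i = s j)
    (i j : I) (hc : col i = col j) : s i = s j := by
  suffices key : ∀ n i j, col i = col j → row j = row i + n → s i = s j by
    rcases le_total (row i) (row j) with hle | hle
    · exact key (row j - row i) i j hc (by omega)
    · exact (key (row i - row j) j i hc.symm (by omega)).symm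
  intro n
  induction n with
  | zero => intro i j hc hr; rw [hinj i j (by omega) hc]
  | succ n ih =>
    intro i j hc hr
    obtain ⟨t, hct, hrt⟩ := hconvex i j hc (by omega)
    exact (hbelow i t hct hrt).trans (ih t j (hct.trans hc) (by omega))

section RhoTilde

variable {I : Type*} (par col : I → ℕ) (rk : I → ℤ) (h : ℤ) (ℓ : ℕ) (q : ℕ → ℤ)

theorem neg_one_pow_mul_rhoTilde (t : I) :
    (-1) ^ par t * rhoTilde par col rk h ℓ q t = h - rk t - ∑ c ∈ Icc (col t) ℓ, q c := by
  rw [rhoTilde, ← mul_assoc, ← mul_pow, neg_one_mul, neg_neg, one_pow, one_mul]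

theorem neg_one_pow_mul_rhoTilde_below {i j : I} (hc : col j = col i)
    (hrk : rk j = rk i + (-1) ^ par j) :
    (-1) ^ par j * rhoTilde par col rk h ℓ q j
      = (-1) ^ par i * rhoTilde par col rk h ℓ q i - (-1) ^ par j := by
  rw [neg_one_pow_mul_rhoTilde, neg_one_pow_mul_rhoTilde, hc, hrk]
  ring

theorem signed_sub_rhoTilde_eq_iff_below {k : Type*} [CommRing k] (a : I → k) {i j : I}
    (hc : col j = col i) (hrk : rk j = rk i + (-1) ^ par j) :
    (-1) ^ par i * (a i - (rhoTilde par col rk h ℓ q i : k))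
        = (-1) ^ par j * (a j - (rhoTilde par col rk h ℓ q j : k))
      ↔ (-1) ^ par i * a i = (-1) ^ par j * (a j + 1) := by
  have hρ : ((-1) ^ par j * rhoTilde par col rk h ℓ q j : ℤ)
      = (-1) ^ par i * rhoTilde par col rk h ℓ q i - (-1) ^ par j :=
    neg_one_pow_mul_rhoTilde_below par col rk h ℓ q hc hrk
  have hρk := congrArg (Int.cast : ℤ → k) hρ
  push_cast at hρk
  constructor <;> intro e
  · linear_combination e - hρk
  · linear_combination e + hρk

end RhoTilde

theorem stmt12_general {k : Type*} [Field k] {I : Type*}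
    (row col par : I → ℕ) (rk : I → ℤ) (a : I → k) (h : ℤ) (ℓ : ℕ) (q : ℕ → ℤ)
    (hpar : ∀ i, par i ≤ 1)
    -- distinct boxes occupy distinct (row, column) positions
    (hinj : ∀ i j : I, row i = row j → col i = col j → i = j)
    -- columns of the pyramid are convex
    (hconvex : ∀ i j : I, col i = col j → row i < row j →
      ∃ t : I, col t = col i ∧ row t = row i + 1)
    -- behaviour of the super row number down a column (context of Lemma 2.8)
    (hrk : ∀ i j : I, col j = col i → row j = row i + 1 →
      rk j = rk i + (-1) ^ par j) :
    ((∀ i j : I, col i = col j → par i = par j →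
        a i - (rhoTilde par col rk h ℓ q i : k) = a j - (rhoTilde par col rk h ℓ q j : k)) ∧
     (∀ i j : I, col i = col j → par i ≠ par j →
        (a i - (rhoTilde par col rk h ℓ q i : k)) + (a j - (rhoTilde par col rk h ℓ q j : k)) = 0))
    ↔ (∀ i j : I, col j = col i → row j = row i + 1 →
        (par i = par j → a i = a j + 1) ∧ (par i ≠ par j → a i + a j = -1)) := by
  set s : I → k := fun i => (-1) ^ par i * (a i - (rhoTilde par col rk h ℓ q i : k))
  have signed_iff (i j : I) := neg_one_pow_mul_eq_neg_one_pow_mul_iff (R := k) (hpar i) (hpar j)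
  have lemma27_iff : ((∀ i j : I, col i = col j → par i = par j →
        a i - (rhoTilde par col rk h ℓ q i : k) = a j - (rhoTilde par col rk h ℓ q j : k)) ∧
      (∀ i j : I, col i = col j → par i ≠ par j →
        (a i - (rhoTilde par col rk h ℓ q i : k)) + (a j - (rhoTilde par col rk h ℓ q j : k)) = 0))
      ↔ ∀ i j, col i = col j → s i = s j :=
    ⟨fun ⟨hsame, hdiff⟩ i j hc => (signed_iff i j _ _).2 ⟨hsame i j hc, hdiff i j hc⟩,
      fun hs => ⟨fun i j hc => ((signed_iff i j _ _).1 (hs i j hc)).1,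
        fun i j hc => ((signed_iff i j _ _).1 (hs i j hc)).2⟩⟩
  have connected_iff : (∀ i j : I, col j = col i → row j = row i + 1 →
        (par i = par j → a i = a j + 1) ∧ (par i ≠ par j → a i + a j = -1))
      ↔ ∀ i j, col j = col i → row j = row i + 1 → s i = s j := by
    refine forall₄_congr fun i j hc hr => ?_
    rw [signed_sub_rhoTilde_eq_iff_below par col rk h ℓ q a hc (hrk i j hc hr), signed_iff,
      ← add_assoc, add_eq_zero_iff_eq_neg]
  rw [lemma27_iff, connected_iff]
  exact ⟨fun hs i j hc _ => hs i j hc.symm, eq_of_col_eq_of_eq_below row col s hinj hconvex⟩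

/-- Proposition 2.9 of the paper: for a `π`-tableau `A` (entries `a : I → k`), the
weight `λ_A - ρ̃` satisfies the conditions of Lemma 2.7 (constancy on same-parity
boxes of a column, antisymmetry across parities in a column) if and only if `A`
is column-connected: whenever box `j` is directly below box `i`, `a i = a j + 1`
if the parities agree and `a i + a j = -1` otherwise. -/
theorem stmt12 {k : Type*} [Field k] [CharZero k] {I : Type*}
    (row col par : I → ℕ) (rk : I → ℤ) (a : I → k) (h : ℤ) (ℓ : ℕ) (q : ℕ → ℤ)
    (hpar : ∀ i, par i ≤ 1)
    -- distinct boxes occupy distinct (row, column) positions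
    (hinj : ∀ i j : I, row i = row j → col i = col j → i = j)
    -- columns of the pyramid are convex
    (hconvex : ∀ i j : I, col i = col j → row i < row j →
      ∃ t : I, col t = col i ∧ row t = row i + 1)
    -- behaviour of the super row number down a column (context of Lemma 2.8)
    (hrk : ∀ i j : I, col j = col i → row j = row i + 1 →
      rk j = rk i + (-1) ^ par j) :
    ((∀ i j : I, col i = col j → par i = par j →
        a i - (rhoTilde par col rk h ℓ q i : k) = a j - (rhoTilde par col rk h ℓ q j : k)) ∧
     (∀ i j : I, col i = col j → par i ≠ par j →
        (a i - (rhoTilde par col rk h ℓ q i : k)) + (a j - (rhoTilde par col rk h ℓ q j : k)) = 0))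
    ↔ (∀ i j : I, col j = col i → row j = row i + 1 →
        (par i = par j → a i = a j + 1) ∧ (par i ≠ par j → a i + a j = -1)) :=
  stmt12_general row col par rk a h ℓ q hpar hinj hconvex hrk
end

section
/- Let $R$ be a (super)commutative ring in which all odd elements are zero, i.e. an ordinary commutative ring viewed as a superalgebra concentrated in even degree. Suppose given elements $d_i^{(r)}$ ($1 \le i \le m+n$, $r \ge 0$) and $d_i'^{(r)}$ with $d_i^{(0)} = d_i'^{(0)} = 1$, $\sum_{t=0}^r d_i^{(t)} d_i'^{(r-t)} = \delta_{r,0}$, and $\sum_{t=0}^{r} d_j'^{(r-t)} d_{j+1}^{(t)} = 0$ for all $1 \le j \le m+n-1$ and $r > p_{j+1} - p_j$, together with $d_1^{(r)} = 0$ for $r > p_1$. Then each $d_i^{(r)}$ for $r > p_i - p_{i-1}$ (with $p_0 = 0$) is a polynomial with integer coefficients in the elements $\{d_j^{(s)} : 1 \le j \le i, 1 \le s \le p_j - p_{j-1}\}$. -/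
open Finset

/-!
Read the relations as identities of power series: `d' j = (d j)⁻¹` and `d' j * d (j + 1)` is a
polynomial of degree at most `p (j + 1) - p j`. Both let one solve for the coefficients of the
unknown series recursively, since the known series has constant term `1`: the coefficients of
`(d j)⁻¹` are integer polynomials in those of `d j`, and the coefficient `d (j + 1) r` with
`r > p (j + 1) - p j` is minus a polynomial in the coefficients of `(d j)⁻¹` and in lower ones of
`d (j + 1)`. An induction on `j` then expresses everything through the first
`p j - p (j - 1)` coefficients of each `d j`.
-/

section Convolution

variable {R : Type*} [CommRing R]

theorem mem_of_sum_range_mul_eq_zero (S : Subring R) {c e : ℕ → R} {N : ℕ} (hc0 : c 0 = 1)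
    (hc : ∀ s, 1 ≤ s → c s ∈ S)
    (hconv : ∀ r, N < r → ∑ t ∈ range (r + 1), c (r - t) * e t = 0)
    (hinit : ∀ t ≤ N, e t ∈ S) (r : ℕ) : e r ∈ S := by
  induction r using Nat.strong_induction_on with
  | _ r ih =>
    rcases le_or_gt r N with hr | hr
    · exact hinit r hr
    have hsum := hconv r hr
    rw [sum_range_succ, Nat.sub_self, hc0, one_mul] at hsum
    rw [eq_neg_of_add_eq_zero_right hsum]
    exact neg_mem (sum_mem fun t ht =>
      mul_mem (hc _ (by simp at ht; omega)) (ih t (mem_range.mp ht)))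

theorem mem_of_sum_range_mul_eq_ite (S : Subring R) {a b : ℕ → R} (ha0 : a 0 = 1)
    (ha : ∀ t, 1 ≤ t → a t ∈ S)
    (hconv : ∀ r, ∑ t ∈ range (r + 1), a t * b (r - t) = if r = 0 then 1 else 0) (s : ℕ) :
    b s ∈ S := by
  refine mem_of_sum_range_mul_eq_zero S ha0 ha (N := 0) (fun r hr => ?_) (fun t ht => ?_) s
  · calc ∑ t ∈ range (r + 1), a (r - t) * b t
        = ∑ t ∈ range (r + 1), a t * b (r - t) := by
          rw [← sum_range_reflect]
          refine sum_congr rfl fun t ht => ?_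
          rw [Nat.add_sub_cancel, Nat.sub_sub_self (by simp at ht; omega)]
      _ = 0 := by rw [hconv r, if_neg hr.ne']
  · have hb0 := hconv 0
    rw [sum_range_one, ha0, one_mul, if_pos rfl] at hb0
    rw [Nat.le_zero.mp ht, hb0]
    exact one_mem S

end Convolution

def initialCoeffs {R : Type*} (p : ℕ → ℕ) (d : ℕ → ℕ → R) (i : ℕ) : Set R :=
  {x : R | ∃ j s, 1 ≤ j ∧ j ≤ i ∧ 1 ≤ s ∧ s ≤ p j - p (j - 1) ∧ x = d j s}

theorem initialCoeffs_mono {R : Type*} (p : ℕ → ℕ) (d : ℕ → ℕ → R) :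
    Monotone (initialCoeffs p d) :=
  fun _ _ hik _ ⟨j, s, h1j, hji, h1s, hs, hx⟩ => ⟨j, s, h1j, hji.trans hik, h1s, hs, hx⟩

theorem mem_closure_initialCoeffs {R : Type*} [CommRing R] (p : ℕ → ℕ) (d : ℕ → ℕ → R)
    {i s : ℕ} (hi : 1 ≤ i) (hs : s ≤ p i - p (i - 1)) (hd0 : d i 0 = 1) :
    d i s ∈ Subring.closure (initialCoeffs p d i) := by
  rcases Nat.eq_zero_or_pos s with rfl | hs0
  · exact hd0 ▸ one_mem _
  · exact Subring.subset_closure ⟨i, s, hi, le_rfl, hs0, hs, rfl⟩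

theorem stmt16_general {R : Type*} [CommRing R] (Nn : ℕ) (p : ℕ → ℕ)
    (hp0 : p 0 = 0) (d d' : ℕ → ℕ → R)
    (hd0 : ∀ i, d i 0 = 1)
    (hconv : ∀ i r, ∑ t ∈ Finset.range (r + 1), d i t * d' i (r - t) =
      if r = 0 then 1 else 0)
    (hnext : ∀ j r, 1 ≤ j → j + 1 ≤ Nn → p (j + 1) - p j < r →
      ∑ t ∈ Finset.range (r + 1), d' j (r - t) * d (j + 1) t = 0)
    (htrunc : ∀ r, p 1 < r → d 1 r = 0) :
    ∀ i r, 1 ≤ i → i ≤ Nn → p i - p (i - 1) < r →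
      d i r ∈ Subring.closure
        {x : R | ∃ j s, 1 ≤ j ∧ j ≤ i ∧ 1 ≤ s ∧ s ≤ p j - p (j - 1) ∧ x = d j s} := by
  suffices h : ∀ i, 1 ≤ i → i ≤ Nn → ∀ r, d i r ∈ Subring.closure (initialCoeffs p d i) from
    fun i r hi hiN _ => h i hi hiN r
  intro i hi
  induction i, hi using Nat.le_induction with
  | base =>
    intro _ r
    rcases le_or_gt r (p 1) with hr | hr
    · exact mem_closure_initialCoeffs p d le_rfl (by simpa [hp0] using hr) (hd0 1)
    · exact htrunc r hr ▸ zero_mem _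
  | succ k hk ih =>
    intro hkN
    have hd' : ∀ s, d' k s ∈ Subring.closure (initialCoeffs p d (k + 1)) :=
      mem_of_sum_range_mul_eq_ite _ (hd0 k)
        (fun t _ => Subring.closure_mono (initialCoeffs_mono p d k.le_succ) (ih (by omega) t))
        (hconv k)
    have hd'0 : d' k 0 = 1 := by simpa [hd0] using hconv k 0
    exact mem_of_sum_range_mul_eq_zero _ hd'0 (fun s _ => hd' s) (hnext k · hk hkN)
      (fun t ht => mem_closure_initialCoeffs p d (by omega) ht (hd0 _))

/-- Core computation behind Proposition 3.3 of the paper: in a commutative ring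
(the even commutative quotient, all odd elements being zero), given elements
`d i r`, `d' i r` with `d i 0 = d' i 0 = 1`, the convolution relations
`∑_t d i t * d' i (r-t) = δ_{r,0}`, the relations
`∑_t d' j (r-t) * d (j+1) t = 0` for `r > p (j+1) - p j`, and the truncation
`d 1 r = 0` for `r > p 1`, every `d i r` with `r > p i - p (i-1)` lies in the
subring generated by `{d j s : 1 ≤ j ≤ i, 1 ≤ s ≤ p j - p (j-1)}` (i.e. is an
integer polynomial in those elements). -/
theorem stmt16 {R : Type*} [CommRing R] (Nn : ℕ) (p : ℕ → ℕ)
    (hp0 : p 0 = 0) (hmono : Monotone p) (d d' : ℕ → ℕ → R)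
    (hd0 : ∀ i, d i 0 = 1) (hd'0 : ∀ i, d' i 0 = 1)
    (hconv : ∀ i r, ∑ t ∈ Finset.range (r + 1), d i t * d' i (r - t) =
      if r = 0 then 1 else 0)
    (hnext : ∀ j r, 1 ≤ j → j + 1 ≤ Nn → p (j + 1) - p j < r →
      ∑ t ∈ Finset.range (r + 1), d' j (r - t) * d (j + 1) t = 0)
    (htrunc : ∀ r, p 1 < r → d 1 r = 0) :
    ∀ i r, 1 ≤ i → i ≤ Nn → p i - p (i - 1) < r →
      d i r ∈ Subring.closure
        {x : R | ∃ j s, 1 ≤ j ∧ j ≤ i ∧ 1 ≤ s ∧ s ≤ p j - p (j - 1) ∧ x = d j s} :=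
  stmt16_general Nn p hp0 d d' hd0 hconv hnext htrunc
end
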